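/- For the information-flow register machine, the well-stamped invariant is preserved by execution: if a machine state S is well-stamped and S steps to S', then S' is well-stamped. -/

import Mathlib

/-! ## The information-flow register machine, over a label lattice -/

/-- Block identifiers: a stamp label and an integer index. -/
abbrev Bid (Lab : Type) := Lab × ℕ

/-- Values: integers, first-class labels, or pointers. -/
inductive Val (Lab : Type) where
  | int (n : Int)
  | lab (ℓ : Lab)
  | ptr (b : Bid Lab) (o : Int)
deriving DecidableEq

/-- A labeled value `v@ℓ`. -/
structure Atom (Lab : Type) where
  val : Val Lab
  lab : Lab
deriving DecidableEq

/-- A labeled program counter `n@ℓ`. -/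
structure LPC (Lab : Type) where
  addr : Int
  lab : Lab
deriving DecidableEq

/-- A call-stack frame: saved (labeled) return pc, saved register file,
result register, and result label. -/
structure Frame (Lab : Type) where
  retpc : LPC Lab
  savedRegs : List (Atom Lab)
  retReg : ℕ
  retLab : Lab

/-- A memory block: a list of labeled values together with the block label. -/
abbrev Block (Lab : Type) := List (Atom Lab) × Lab

/-- Block-structured memory with per-level allocation: for each stamp, the
list of blocks allocated with that stamp (in allocation order). -/
abbrev Mem (Lab : Type) := Lab → List (Block Lab)

/-- Instructions of the register machine. -/
inductive RInstr (Lab : Type) where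
  | Put (n : Int) (rd : ℕ)
  | Mov (rs rd : ℕ)
  | Load (rp rd : ℕ)
  | Store (rp rs : ℕ)
  | Add (r1 r2 rd : ℕ)
  | Mult (r1 r2 rd : ℕ)
  | Noop
  | Halt
  | Jump (r : ℕ)
  | BranchNZ (n : Int) (r : ℕ)
  | Call (r1 r2 r3 : ℕ)
  | Return
  | PutLabel (ℓ : Lab) (rd : ℕ)
  | LabelOf (rs rd : ℕ)
  | PcLabel (rd : ℕ)
  | Join (r1 r2 rd : ℕ)
  | FlowsTo (r1 r2 rd : ℕ)
  | Alloc (rn rl rd : ℕ)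
  | Write (rp rs : ℕ)
  | Upgrade (rp rl : ℕ)
  | Eq (r1 r2 rd : ℕ)
  | GetOffset (rp rd : ℕ)
  | SetOffset (rp ro rd : ℕ)
  | GetBlockSize (rp rd : ℕ)
  | GetBlockLabel (rp rd : ℕ)

/-- A register-machine state. -/
structure RState (Lab : Type) where
  pc : LPC Lab
  rf : List (Atom Lab)
  cs : List (Frame Lab)
  mem : Mem Lab
  imem : List (RInstr Lab)

/-- Lookup a list at an integer index. -/
def getI {α : Type} (xs : List α) (i : Int) : Option α :=
  if 0 ≤ i then xs[i.toNat]? else none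

/-- Update a list at an integer index. -/
def setI {α : Type} (xs : List α) (i : Int) (a : α) : List α :=
  if 0 ≤ i then xs.set i.toNat a else xs

section Machine

variable {Lab : Type} [Lattice Lab] [OrderBot Lab] [DecidableEq Lab]
variable [DecidableRel ((· ≤ ·) : Lab → Lab → Prop)]

/-- Lookup a memory at a block identifier. -/
def mget (m : Mem Lab) (b : Bid Lab) : Option (Block Lab) := (m b.1)[b.2]?

/-- Update a memory at a block identifier. -/
def mset (m : Mem Lab) (b : Bid Lab) (blk : Block Lab) : Mem Lab :=
  fun σ => if σ = b.1 then (m σ).set b.2 blk else m σ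

/-- The fresh block identifier for stamp `σ`: the first unallocated index. -/
def fresh (m : Mem Lab) (σ : Lab) : Bid Lab := (σ, (m σ).length)

/-- Allocate a new block with stamp `σ`. -/
def allocMem (m : Mem Lab) (σ : Lab) (blk : Block Lab) : Mem Lab :=
  fun σ' => if σ' = σ then m σ' ++ [blk] else m σ'

/-- The current instruction of a state. -/
def instrAt (S : RState Lab) : Option (RInstr Lab) := getI S.imem S.pc.addr

/-- The step relation of the information-flow register machine. -/
inductive RStep : RState Lab → RState Lab → Prop where
  | put {S : RState Lab} {n rd} :
      instrAt S = some (.Put n rd) →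
      RStep S { S with pc := ⟨S.pc.addr + 1, S.pc.lab⟩,
                       rf := S.rf.set rd ⟨.int n, ⊥⟩ }
  | putLabel {S : RState Lab} {ℓ rd} :
      instrAt S = some (.PutLabel ℓ rd) →
      RStep S { S with pc := ⟨S.pc.addr + 1, S.pc.lab⟩,
                       rf := S.rf.set rd ⟨.lab ℓ, ⊥⟩ }
  | mov {S : RState Lab} {rs rd a} :
      instrAt S = some (.Mov rs rd) →
      S.rf[rs]? = some a →
      RStep S { S with pc := ⟨S.pc.addr + 1, S.pc.lab⟩, rf := S.rf.set rd a }
  | load {S : RState Lab} {rp rd b o ℓp vs ℓb v ℓv} :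
      instrAt S = some (.Load rp rd) →
      S.rf[rp]? = some ⟨.ptr b o, ℓp⟩ →
      mget S.mem b = some (vs, ℓb) →
      getI vs o = some ⟨v, ℓv⟩ →
      RStep S { S with pc := ⟨S.pc.addr + 1, S.pc.lab ⊔ ℓp ⊔ ℓb⟩,
                       rf := S.rf.set rd ⟨v, ℓv⟩ }
  | store {S : RState Lab} {rp rs b o ℓp v ℓv vs ℓb} :
      instrAt S = some (.Store rp rs) →
      S.rf[rp]? = some ⟨.ptr b o, ℓp⟩ →
      S.rf[rs]? = some ⟨v, ℓv⟩ →
      mget S.mem b = some (vs, ℓb) →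
      S.pc.lab ⊔ ℓp ≤ ℓb →
      RStep S { S with pc := ⟨S.pc.addr + 1, S.pc.lab⟩,
                       mem := mset S.mem b (setI vs o ⟨v, ℓv⟩, ℓb) }
  | write {S : RState Lab} {rp rs b o ℓp v ℓv vs ℓb v' ℓv'} :
      instrAt S = some (.Write rp rs) →
      S.rf[rp]? = some ⟨.ptr b o, ℓp⟩ →
      S.rf[rs]? = some ⟨v, ℓv⟩ →
      mget S.mem b = some (vs, ℓb) →
      getI vs o = some ⟨v', ℓv'⟩ →
      S.pc.lab ⊔ ℓp ⊔ ℓv ≤ ℓb ⊔ ℓv' →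
      RStep S { S with pc := ⟨S.pc.addr + 1, S.pc.lab⟩,
                       mem := mset S.mem b (setI vs o ⟨v, ℓv'⟩, ℓb) }
  | upgrade {S : RState Lab} {rp rl b o ℓp ℓ ℓ' vs ℓb v' ℓv'} :
      instrAt S = some (.Upgrade rp rl) →
      S.rf[rp]? = some ⟨.ptr b o, ℓp⟩ →
      S.rf[rl]? = some ⟨.lab ℓ, ℓ'⟩ →
      mget S.mem b = some (vs, ℓb) →
      getI vs o = some ⟨v', ℓv'⟩ →
      ℓv' ≤ ℓ ⊔ ℓb →
      (S.pc.lab ⊔ ℓ') ⊔ ℓp ≤ ℓb →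
      RStep S { S with pc := ⟨S.pc.addr + 1, S.pc.lab ⊔ ℓ'⟩,
                       mem := mset S.mem b (setI vs o ⟨v', ℓ⟩, ℓb) }
  | alloc {S : RState Lab} {rn rl rd n ℓn ℓ ℓ'} :
      instrAt S = some (.Alloc rn rl rd) →
      S.rf[rn]? = some ⟨.int n, ℓn⟩ →
      0 < n →
      S.rf[rl]? = some ⟨.lab ℓ, ℓ'⟩ →
      RStep S { S with pc := ⟨S.pc.addr + 1, S.pc.lab⟩,
                       rf := S.rf.set rd
                         ⟨.ptr (fresh S.mem (S.pc.lab ⊔ ℓn ⊔ ℓ')) 0, ℓn ⊔ ℓ'⟩,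
                       mem := allocMem S.mem (S.pc.lab ⊔ ℓn ⊔ ℓ')
                         (List.replicate n.toNat ⟨.int 0, ⊥⟩, ℓ) }
  | add {S : RState Lab} {r1 r2 rd n1 ℓ1 n2 ℓ2} :
      instrAt S = some (.Add r1 r2 rd) →
      S.rf[r1]? = some ⟨.int n1, ℓ1⟩ →
      S.rf[r2]? = some ⟨.int n2, ℓ2⟩ →
      RStep S { S with pc := ⟨S.pc.addr + 1, S.pc.lab⟩,
                       rf := S.rf.set rd ⟨.int (n1 + n2), ℓ1 ⊔ ℓ2⟩ }
  | mult {S : RState Lab} {r1 r2 rd n1 ℓ1 n2 ℓ2} :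
      instrAt S = some (.Mult r1 r2 rd) →
      S.rf[r1]? = some ⟨.int n1, ℓ1⟩ →
      S.rf[r2]? = some ⟨.int n2, ℓ2⟩ →
      RStep S { S with pc := ⟨S.pc.addr + 1, S.pc.lab⟩,
                       rf := S.rf.set rd ⟨.int (n1 * n2), ℓ1 ⊔ ℓ2⟩ }
  | eq {S : RState Lab} {r1 r2 rd v1 ℓ1 v2 ℓ2} :
      instrAt S = some (.Eq r1 r2 rd) →
      S.rf[r1]? = some ⟨v1, ℓ1⟩ →
      S.rf[r2]? = some ⟨v2, ℓ2⟩ →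
      RStep S { S with pc := ⟨S.pc.addr + 1, S.pc.lab⟩,
                       rf := S.rf.set rd ⟨.int (if v1 = v2 then 1 else 0), ℓ1 ⊔ ℓ2⟩ }
  | noop {S : RState Lab} :
      instrAt S = some .Noop →
      RStep S { S with pc := ⟨S.pc.addr + 1, S.pc.lab⟩ }
  | jump {S : RState Lab} {r n ℓn} :
      instrAt S = some (.Jump r) →
      S.rf[r]? = some ⟨.int n, ℓn⟩ →
      RStep S { S with pc := ⟨n, ℓn ⊔ S.pc.lab⟩ }
  | branchNZ {S : RState Lab} {n r k ℓ} :
      instrAt S = some (.BranchNZ n r) →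
      S.rf[r]? = some ⟨.int k, ℓ⟩ →
      RStep S { S with pc := ⟨if k = 0 then S.pc.addr + 1 else S.pc.addr + n,
                              S.pc.lab ⊔ ℓ⟩ }
  | call {S : RState Lab} {r1 r2 r3 n ℓn ℓ ℓ'} :
      instrAt S = some (.Call r1 r2 r3) →
      S.rf[r1]? = some ⟨.int n, ℓn⟩ →
      S.rf[r3]? = some ⟨.lab ℓ, ℓ'⟩ →
      RStep S { S with pc := ⟨n, S.pc.lab ⊔ ℓn⟩,
                       cs := ⟨⟨S.pc.addr + 1, S.pc.lab ⊔ ℓ'⟩, S.rf, r2, ℓ⟩ :: S.cs }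
  | ret {S : RState Lab} {f : Frame Lab} {cs' v ℓ} :
      instrAt S = some .Return →
      S.cs = f :: cs' →
      S.rf[f.retReg]? = some ⟨v, ℓ⟩ →
      ℓ ⊔ S.pc.lab ≤ f.retLab ⊔ f.retpc.lab →
      RStep S { S with pc := f.retpc,
                       rf := f.savedRegs.set f.retReg ⟨v, f.retLab⟩,
                       cs := cs' }
  | labelOf {S : RState Lab} {rs rd v ℓ} :
      instrAt S = some (.LabelOf rs rd) →
      S.rf[rs]? = some ⟨v, ℓ⟩ →
      RStep S { S with pc := ⟨S.pc.addr + 1, S.pc.lab⟩,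
                       rf := S.rf.set rd ⟨.lab ℓ, ⊥⟩ }
  | pcLabel {S : RState Lab} {rd} :
      instrAt S = some (.PcLabel rd) →
      RStep S { S with pc := ⟨S.pc.addr + 1, S.pc.lab⟩,
                       rf := S.rf.set rd ⟨.lab S.pc.lab, ⊥⟩ }
  | join {S : RState Lab} {r1 r2 rd ℓ1 ℓ1' ℓ2 ℓ2'} :
      instrAt S = some (.Join r1 r2 rd) →
      S.rf[r1]? = some ⟨.lab ℓ1, ℓ1'⟩ →
      S.rf[r2]? = some ⟨.lab ℓ2, ℓ2'⟩ →
      RStep S { S with pc := ⟨S.pc.addr + 1, S.pc.lab⟩,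
                       rf := S.rf.set rd ⟨.lab (ℓ1 ⊔ ℓ2), ℓ1' ⊔ ℓ2'⟩ }
  | flowsTo {S : RState Lab} {r1 r2 rd ℓ1 ℓ1' ℓ2 ℓ2'} :
      instrAt S = some (.FlowsTo r1 r2 rd) →
      S.rf[r1]? = some ⟨.lab ℓ1, ℓ1'⟩ →
      S.rf[r2]? = some ⟨.lab ℓ2, ℓ2'⟩ →
      RStep S { S with pc := ⟨S.pc.addr + 1, S.pc.lab⟩,
                       rf := S.rf.set rd
                         ⟨.int (if ℓ1 ≤ ℓ2 then 1 else 0), ℓ1' ⊔ ℓ2'⟩ }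
  | getOffset {S : RState Lab} {rp rd b o ℓp} :
      instrAt S = some (.GetOffset rp rd) →
      S.rf[rp]? = some ⟨.ptr b o, ℓp⟩ →
      RStep S { S with pc := ⟨S.pc.addr + 1, S.pc.lab⟩,
                       rf := S.rf.set rd ⟨.int o, ℓp⟩ }
  | setOffset {S : RState Lab} {rp ro rd b o' ℓp o ℓo} :
      instrAt S = some (.SetOffset rp ro rd) →
      S.rf[rp]? = some ⟨.ptr b o', ℓp⟩ →
      S.rf[ro]? = some ⟨.int o, ℓo⟩ →
      RStep S { S with pc := ⟨S.pc.addr + 1, S.pc.lab⟩,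
                       rf := S.rf.set rd ⟨.ptr b o, ℓp ⊔ ℓo⟩ }
  | getBlockSize {S : RState Lab} {rp rd b o ℓp vs ℓb} :
      instrAt S = some (.GetBlockSize rp rd) →
      S.rf[rp]? = some ⟨.ptr b o, ℓp⟩ →
      mget S.mem b = some (vs, ℓb) →
      RStep S { S with pc := ⟨S.pc.addr + 1, S.pc.lab ⊔ ℓp⟩,
                       rf := S.rf.set rd ⟨.int vs.length, ℓb⟩ }
  | getBlockLabel {S : RState Lab} {rp rd b o ℓp vs ℓb} :
      instrAt S = some (.GetBlockLabel rp rd) →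
      S.rf[rp]? = some ⟨.ptr b o, ℓp⟩ →
      mget S.mem b = some (vs, ℓb) →
      RStep S { S with pc := ⟨S.pc.addr + 1, S.pc.lab⟩,
                       rf := S.rf.set rd ⟨.lab ℓb, ℓp⟩ }

/-- The blocks directly accessible at level `ℓ` from a list of atoms. -/
def blocksIn (ℓ : Lab) (atoms : List (Atom Lab)) (b : Bid Lab) : Prop :=
  ∃ o ℓv, (⟨.ptr b o, ℓv⟩ : Atom Lab) ∈ atoms ∧ ℓv ≤ ℓ

/-- The root set of a state at observation level `ℓ`. -/
def rootSet (ℓ : Lab) (S : RState Lab) (b : Bid Lab) : Prop :=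
  (S.pc.lab ≤ ℓ ∧ blocksIn ℓ S.rf b) ∨
  ∃ f ∈ S.cs, f.retpc.lab ≤ ℓ ∧ blocksIn ℓ f.savedRegs b

/-- Direct links between blocks visible at level `ℓ`. -/
def link (ℓ : Lab) (m : Mem Lab) (b b' : Bid Lab) : Prop :=
  ∃ vs ℓb, mget m b = some (vs, ℓb) ∧ ℓb ≤ ℓ ∧ blocksIn ℓ vs b'

/-- A state is well-stamped if every block reachable at level `ℓ` from the
root set at `ℓ` has a stamp flowing to `ℓ`. -/
def WellStamped (S : RState Lab) : Prop :=
  ∀ ℓ b b', rootSet ℓ S b → Relation.ReflTransGen (link ℓ S.mem) b b' →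
    b'.1 ≤ ℓ

end Machine

/-! A step never makes a block reachable at a level `ℓ` unless it was already reachable at `ℓ`,
with one exception: a freshly allocated block, whose stamp `ℓpc ⊔ ℓn ⊔ ℓ'` flows to every level at
which the new pointer is visible, and which holds no pointers. Every other pointer that becomes
visible at `ℓ` (in a register, a call frame or a memory block) was already visible at `ℓ` from an
old root; this is what the flow checks of Store, Write, Upgrade and Return and the raised pc labels
of Load and Call ensure. -/

section Lists

variable {α : Type} {xs : List α} {a : α}

theorem mem_of_getI {i : Int} (h : getI xs i = some a) : a ∈ xs := by
  unfold getI at h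
  split at h
  · exact List.mem_of_getElem? h
  · simp at h

theorem set_subset_cons (i : ℕ) : xs.set i a ⊆ a :: xs := fun _ hx =>
  (List.mem_or_eq_of_mem_set hx).elim (List.mem_cons_of_mem _) fun h => h ▸ List.mem_cons_self

theorem setI_subset_cons (i : Int) : setI xs i a ⊆ a :: xs := by
  unfold setI
  split
  · exact set_subset_cons _
  · exact List.subset_cons_self a xs

end Lists

section Memory

variable {Lab : Type}

theorem mget_fresh (m : Mem Lab) (σ : Lab) : mget m (fresh m σ) = none := by
  simp [mget, fresh]

variable [DecidableEq Lab]

theorem mget_mset_self {m : Mem Lab} {b : Bid Lab} {blk blk' : Block Lab}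
    (h : mget m b = some blk') : mget (mset m b blk) b = some blk := by
  have hlt : b.2 < (m b.1).length := (List.getElem?_eq_some_iff.mp h).1
  simp [mget, mset, List.getElem?_set_self hlt]

theorem mget_mset_of_ne {m : Mem Lab} {b x : Bid Lab} {blk : Block Lab} (h : x ≠ b) :
    mget (mset m b blk) x = mget m x := by
  unfold mget mset
  split_ifs with h1
  · exact List.getElem?_set_ne fun h2 => h (Prod.ext h1 h2.symm)
  · rfl

theorem mget_allocMem_fresh (m : Mem Lab) (σ : Lab) (blk : Block Lab) :
    mget (allocMem m σ blk) (fresh m σ) = some blk := by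
  simp [mget, allocMem, fresh]

theorem mget_allocMem_of_ne {m : Mem Lab} {σ : Lab} {blk : Block Lab} {x : Bid Lab}
    (h : x ≠ fresh m σ) : mget (allocMem m σ blk) x = mget m x := by
  unfold mget allocMem
  split_ifs with h1
  · subst h1
    rcases Nat.lt_or_ge x.2 (m x.1).length with hlt | hge
    · exact List.getElem?_append_left hlt
    · have hgt : (m x.1).length < x.2 := lt_of_le_of_ne hge fun he => h (Prod.ext rfl he.symm)
      rw [List.getElem?_eq_none (le_of_lt hgt), List.getElem?_eq_none (by simpa using hgt)]
  · rfl

end Memory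

section Reachability

variable {Lab : Type} [Lattice Lab] {ℓ : Lab} {a : Atom Lab} {xs ys : List (Atom Lab)}
  {b b' : Bid Lab}

theorem blocksIn_mono (h : xs ⊆ ys) (hb : blocksIn ℓ xs b) : blocksIn ℓ ys b :=
  let ⟨o, ℓv, hmem, hle⟩ := hb
  ⟨o, ℓv, h hmem, hle⟩

theorem blocksIn_cons : blocksIn ℓ (a :: xs) b ↔ blocksIn ℓ [a] b ∨ blocksIn ℓ xs b := by
  simp [blocksIn, or_and_right, exists_or]

theorem blocksIn_singleton : blocksIn ℓ [a] b ↔ a.lab ≤ ℓ ∧ ∃ o, a.val = .ptr b o := by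
  obtain ⟨v, ℓv⟩ := a
  simp only [blocksIn, List.mem_singleton, Atom.mk.injEq]
  constructor
  · rintro ⟨o, _, ⟨rfl, rfl⟩, hle⟩
    exact ⟨hle, o, rfl⟩
  · rintro ⟨hle, o, rfl⟩
    exact ⟨o, ℓv, ⟨rfl, rfl⟩, hle⟩

theorem blocksIn_of_mem (ha : a ∈ xs) (hb : blocksIn ℓ [a] b) : blocksIn ℓ xs b :=
  blocksIn_mono (List.cons_subset.2 ⟨ha, List.nil_subset _⟩) hb

theorem blocksIn_of_getElem? {ℓv : Lab} {r : ℕ} {o : Int} (h : xs[r]? = some ⟨.ptr b o, ℓv⟩)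
    (hle : ℓv ≤ ℓ) : blocksIn ℓ xs b :=
  ⟨o, ℓv, List.mem_of_getElem? h, hle⟩

theorem link_mset_setI [DecidableEq Lab] {ℓb : Lab} {m : Mem Lab} {x y : Bid Lab}
    {vs : List (Atom Lab)} {o : Int} (hb : mget m b = some (vs, ℓb))
    (h : link ℓ (mset m b (setI vs o a, ℓb)) x y) :
    link ℓ m x y ∨ x = b ∧ ℓb ≤ ℓ ∧ blocksIn ℓ [a] y := by
  obtain ⟨ws, ℓw, hx, hle, hy⟩ := h
  by_cases hxb : x = b
  · subst hxb
    rw [mget_mset_self hb, Option.some.injEq, Prod.mk.injEq] at hx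
    obtain ⟨rfl, rfl⟩ := hx
    rcases blocksIn_cons.1 (blocksIn_mono (setI_subset_cons o) hy) with hy | hy
    · exact Or.inr ⟨rfl, hle, hy⟩
    · exact Or.inl ⟨vs, ℓb, hb, hle, hy⟩
  · rw [mget_mset_of_ne hxb] at hx
    exact Or.inl ⟨ws, ℓw, hx, hle, hy⟩

theorem link_allocMem_replicate [OrderBot Lab] [DecidableEq Lab] {ℓb σ : Lab} {m : Mem Lab}
    {k : ℕ} {x y : Bid Lab} (h : link ℓ (allocMem m σ (List.replicate k ⟨.int 0, ⊥⟩, ℓb)) x y) :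
    link ℓ m x y := by
  obtain ⟨ws, ℓw, hx, hle, hy⟩ := h
  by_cases hxf : x = fresh m σ
  · subst hxf
    rw [mget_allocMem_fresh, Option.some.injEq, Prod.mk.injEq] at hx
    obtain ⟨rfl, -⟩ := hx
    obtain ⟨_, _, hmem, -⟩ := hy
    cases List.eq_of_mem_replicate hmem
  · rw [mget_allocMem_of_ne hxf] at hx
    exact ⟨ws, ℓw, hx, hle, hy⟩

theorem not_link_fresh {m : Mem Lab} {σ : Lab} {y : Bid Lab} : ¬ link ℓ m (fresh m σ) y := by
  rintro ⟨_, _, h, -⟩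
  simp [mget_fresh] at h

def Reachable (ℓ : Lab) (S : RState Lab) (b : Bid Lab) : Prop :=
  ∃ r, rootSet ℓ S r ∧ Relation.ReflTransGen (link ℓ S.mem) r b

variable {S S' : RState Lab}

theorem Reachable.of_rootSet (h : rootSet ℓ S b) : Reachable ℓ S b := ⟨b, h, .refl⟩

theorem Reachable.tail (h : Reachable ℓ S b) (hl : link ℓ S.mem b b') : Reachable ℓ S b' :=
  let ⟨r, hr, hrb⟩ := h
  ⟨r, hr, hrb.tail hl⟩

theorem Reachable.induction {P : Bid Lab → Prop} (hroot : ∀ x, rootSet ℓ S x → P x)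
    (hlink : ∀ x y, P x → link ℓ S.mem x y → P y) (h : Reachable ℓ S b) : P b := by
  obtain ⟨r, hr, hrb⟩ := h
  induction hrb with
  | refl => exact hroot r hr
  | tail _ hl ih => exact hlink _ _ ih hl

theorem WellStamped.le (hws : WellStamped S) (h : Reachable ℓ S b) : b.1 ≤ ℓ :=
  let ⟨r, hr, hrb⟩ := h
  hws ℓ r b hr hrb

theorem WellStamped.of_simulation (hws : WellStamped S)
    (hroot : ∀ ℓ b, rootSet ℓ S' b → Reachable ℓ S b)
    (hlink : ∀ ℓ x y, Reachable ℓ S x → link ℓ S'.mem x y → Reachable ℓ S y) :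
    WellStamped S' :=
  fun ℓ r _ hr hrb => hws.le (Reachable.induction (hroot ℓ) (hlink ℓ) ⟨r, hr, hrb⟩)

theorem WellStamped.of_mem_eq (hws : WellStamped S) (hmem : S'.mem = S.mem)
    (hroot : ∀ ℓ b, rootSet ℓ S' b → Reachable ℓ S b) : WellStamped S' :=
  hws.of_simulation hroot fun _ _ _ hx hl => hx.tail (hmem ▸ hl)

theorem rootSet_of_pc_le (h : rootSet ℓ S' b) (hpc : S.pc.lab ≤ S'.pc.lab) (hrf : S'.rf = S.rf)
    (hcs : S'.cs = S.cs) : rootSet ℓ S b := by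
  rcases h with ⟨hl, hb⟩ | hf
  · exact Or.inl ⟨hpc.trans hl, hrf ▸ hb⟩
  · exact Or.inr (hcs ▸ hf)

theorem rootSet_of_setReg {rd : ℕ} (h : rootSet ℓ S' b)
    (hpc : S.pc.lab ≤ S'.pc.lab) (hrf : S'.rf = S.rf.set rd a) (hcs : S'.cs = S.cs) :
    rootSet ℓ S b ∨ S'.pc.lab ≤ ℓ ∧ blocksIn ℓ [a] b := by
  rcases h with ⟨hl, hb⟩ | hf
  · rw [hrf] at hb
    rcases blocksIn_cons.1 (blocksIn_mono (set_subset_cons _) hb) with hb | hb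
    · exact Or.inr ⟨hl, hb⟩
    · exact Or.inl (Or.inl ⟨hpc.trans hl, hb⟩)
  · exact Or.inl (Or.inr (hcs ▸ hf))

theorem rootSet_of_getElem? {r : ℕ} (hpc : S.pc.lab ≤ ℓ) (hr : S.rf[r]? = some a)
    (hb : blocksIn ℓ [a] b) : rootSet ℓ S b :=
  Or.inl ⟨hpc, blocksIn_of_mem (List.mem_of_getElem? hr) hb⟩

variable {n : Int} {ℓpc' : Lab} {rd : ℕ}

theorem WellStamped.setPc (hws : WellStamped S) (hpc : S.pc.lab ≤ ℓpc') :
    WellStamped { S with pc := ⟨n, ℓpc'⟩ } :=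
  hws.of_mem_eq rfl fun _ _ h => .of_rootSet (rootSet_of_pc_le h hpc rfl rfl)

theorem WellStamped.setReg (hws : WellStamped S) (hpc : S.pc.lab ≤ ℓpc')
    (ha : ∀ ℓ b, ℓpc' ≤ ℓ → blocksIn ℓ [a] b → Reachable ℓ S b) :
    WellStamped { S with pc := ⟨n, ℓpc'⟩, rf := S.rf.set rd a } :=
  hws.of_mem_eq rfl fun ℓ b h =>
    (rootSet_of_setReg h hpc rfl rfl).elim .of_rootSet fun ⟨hl, hb⟩ => ha ℓ b hl hb

theorem WellStamped.setReg_of_not_ptr (hws : WellStamped S) (hpc : S.pc.lab ≤ ℓpc')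
    (ha : ∀ b o, a.val ≠ .ptr b o) :
    WellStamped { S with pc := ⟨n, ℓpc'⟩, rf := S.rf.set rd a } :=
  hws.setReg hpc fun _ _ _ hb =>
    let ⟨_, _, hv⟩ := blocksIn_singleton.1 hb
    absurd hv (ha _ _)

theorem WellStamped.load {rp : ℕ} {o : Int} {ℓp ℓb : Lab} {vs : List (Atom Lab)}
    (hws : WellStamped S) (hrp : S.rf[rp]? = some ⟨.ptr b o, ℓp⟩)
    (hm : mget S.mem b = some (vs, ℓb)) (hget : getI vs o = some a) :
    WellStamped { S with pc := ⟨n, S.pc.lab ⊔ ℓp ⊔ ℓb⟩, rf := S.rf.set rd a } :=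
  hws.setReg (le_sup_left.trans le_sup_left) fun ℓ y hl hy => by
    simp only [sup_le_iff] at hl
    obtain ⟨⟨hpc, hp⟩, hb⟩ := hl
    have hroot : rootSet ℓ S b := Or.inl ⟨hpc, blocksIn_of_getElem? hrp hp⟩
    exact (Reachable.of_rootSet hroot).tail
      ⟨vs, ℓb, hm, hb, blocksIn_of_mem (mem_of_getI hget) hy⟩

theorem WellStamped.setOffset {rp : ℕ} {o o' : Int} {ℓp ℓo : Lab} (hws : WellStamped S)
    (hrp : S.rf[rp]? = some ⟨.ptr b o', ℓp⟩) :
    WellStamped { S with pc := ⟨n, S.pc.lab⟩, rf := S.rf.set rd ⟨.ptr b o, ℓp ⊔ ℓo⟩ } :=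
  hws.setReg le_rfl fun _ _ hl hy => by
    obtain ⟨hle, _, ⟨⟩⟩ := blocksIn_singleton.1 hy
    exact .of_rootSet (Or.inl ⟨hl, blocksIn_of_getElem? hrp (le_sup_left.trans hle)⟩)

theorem WellStamped.updateBlock [DecidableEq Lab] {o : Int} {ℓb : Lab} {vs : List (Atom Lab)}
    (hws : WellStamped S) (hpc : S.pc.lab ≤ ℓpc') (hm : mget S.mem b = some (vs, ℓb))
    (ha : ∀ ℓ y, ℓb ≤ ℓ → blocksIn ℓ [a] y → Reachable ℓ S b → Reachable ℓ S y) :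
    WellStamped { S with pc := ⟨n, ℓpc'⟩, mem := mset S.mem b (setI vs o a, ℓb) } :=
  hws.of_simulation (fun _ _ h => .of_rootSet (rootSet_of_pc_le h hpc rfl rfl))
    fun ℓ _ y hx hl => by
      rcases link_mset_setI hm hl with hl | ⟨rfl, hle, hy⟩
      · exact hx.tail hl
      · exact ha ℓ y hle hy hx

theorem WellStamped.store [DecidableEq Lab] {rs : ℕ} {o : Int} {ℓb : Lab} {vs : List (Atom Lab)}
    (hws : WellStamped S) (hrs : S.rf[rs]? = some a) (hm : mget S.mem b = some (vs, ℓb))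
    (hchk : S.pc.lab ≤ ℓb) :
    WellStamped { S with pc := ⟨n, S.pc.lab⟩, mem := mset S.mem b (setI vs o a, ℓb) } :=
  hws.updateBlock le_rfl hm fun _ _ hle hy _ =>
    .of_rootSet (rootSet_of_getElem? (hchk.trans hle) hrs hy)

theorem WellStamped.write [DecidableEq Lab] {rs : ℕ} {o : Int} {v : Val Lab} {ℓv ℓv' ℓb : Lab}
    {vs : List (Atom Lab)} (hws : WellStamped S) (hrs : S.rf[rs]? = some ⟨v, ℓv⟩)
    (hm : mget S.mem b = some (vs, ℓb)) (hchk : S.pc.lab ⊔ ℓv ≤ ℓb ⊔ ℓv') :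
    WellStamped { S with pc := ⟨n, S.pc.lab⟩, mem := mset S.mem b (setI vs o ⟨v, ℓv'⟩, ℓb) } :=
  hws.updateBlock le_rfl hm fun ℓ _ hle hy _ => by
    obtain ⟨hv', o', hv⟩ := blocksIn_singleton.1 hy
    have hflow : S.pc.lab ⊔ ℓv ≤ ℓ := hchk.trans (sup_le hle hv')
    exact .of_rootSet (rootSet_of_getElem? (le_sup_left.trans hflow) hrs
      (blocksIn_singleton.2 ⟨le_sup_right.trans hflow, o', hv⟩))

theorem WellStamped.upgrade [DecidableEq Lab] {o : Int} {v : Val Lab} {ℓv ℓu ℓb : Lab}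
    {vs : List (Atom Lab)} (hws : WellStamped S) (hpc : S.pc.lab ≤ ℓpc')
    (hm : mget S.mem b = some (vs, ℓb)) (hget : getI vs o = some ⟨v, ℓv⟩) (hup : ℓv ≤ ℓu ⊔ ℓb) :
    WellStamped { S with pc := ⟨n, ℓpc'⟩, mem := mset S.mem b (setI vs o ⟨v, ℓu⟩, ℓb) } :=
  hws.updateBlock hpc hm fun _ _ hle hy hb => by
    obtain ⟨hu, o', hv⟩ := blocksIn_singleton.1 hy
    exact hb.tail ⟨vs, ℓb, hm, hle, blocksIn_of_mem (mem_of_getI hget)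
      (blocksIn_singleton.2 ⟨hup.trans (sup_le hu hle), o', hv⟩)⟩

theorem WellStamped.alloc [OrderBot Lab] [DecidableEq Lab] {σ ℓa ℓb : Lab} {k : ℕ}
    (hws : WellStamped S) (hpc : S.pc.lab ≤ ℓpc') (hσ : σ ≤ ℓpc' ⊔ ℓa) :
    WellStamped { S with pc := ⟨n, ℓpc'⟩, rf := S.rf.set rd ⟨.ptr (fresh S.mem σ) 0, ℓa⟩,
                         mem := allocMem S.mem σ (List.replicate k ⟨.int 0, ⊥⟩, ℓb) } := by
  intro ℓ r b hr hrb
  have hreach : Reachable ℓ S b ∨ b = fresh S.mem σ ∧ σ ≤ ℓ := by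
    refine Reachable.induction (P := fun b => Reachable ℓ S b ∨ b = fresh S.mem σ ∧ σ ≤ ℓ)
      ?_ ?_ ⟨r, hr, hrb⟩
    · intro b hb
      rcases rootSet_of_setReg hb hpc rfl rfl with hb | ⟨hl, hb⟩
      · exact Or.inl (.of_rootSet hb)
      · obtain ⟨hla, _, ⟨⟩⟩ := blocksIn_singleton.1 hb
        exact Or.inr ⟨rfl, hσ.trans (sup_le hl hla)⟩
    · rintro x y (hx | ⟨rfl, -⟩) hl
      · exact Or.inl (hx.tail (link_allocMem_replicate hl))
      · exact (not_link_fresh (link_allocMem_replicate hl)).elim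
  rcases hreach with hb | ⟨rfl, hσℓ⟩
  · exact hws.le hb
  · exact hσℓ

theorem WellStamped.call {p : LPC Lab} {r : ℕ} {ℓr : Lab} (hws : WellStamped S)
    (hpc : S.pc.lab ≤ ℓpc') (hret : S.pc.lab ≤ p.lab) :
    WellStamped { S with pc := ⟨n, ℓpc'⟩, cs := ⟨p, S.rf, r, ℓr⟩ :: S.cs } :=
  hws.of_mem_eq rfl fun _ _ h => by
    refine .of_rootSet ?_
    rcases h with ⟨hl, hb⟩ | ⟨f, hf, hl, hb⟩
    · exact Or.inl ⟨hpc.trans hl, hb⟩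
    · rcases List.mem_cons.1 hf with rfl | hf
      · exact Or.inl ⟨hret.trans hl, hb⟩
      · exact Or.inr ⟨f, hf, hl, hb⟩

theorem WellStamped.ret {f : Frame Lab} {cs' : List (Frame Lab)} {v : Val Lab} {ℓv : Lab}
    (hws : WellStamped S) (hcs : S.cs = f :: cs') (hr : S.rf[f.retReg]? = some ⟨v, ℓv⟩)
    (hflow : ℓv ⊔ S.pc.lab ≤ f.retLab ⊔ f.retpc.lab) :
    WellStamped { S with pc := f.retpc, rf := f.savedRegs.set f.retReg ⟨v, f.retLab⟩,
                         cs := cs' } :=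
  hws.of_mem_eq rfl fun ℓ b h => by
    refine .of_rootSet ?_
    rcases h with ⟨hl, hb⟩ | ⟨g, hg, hl, hb⟩
    · rcases blocksIn_cons.1 (blocksIn_mono (set_subset_cons _) hb) with hb | hb
      · obtain ⟨hlab, o, hv⟩ := blocksIn_singleton.1 hb
        have hflow' : ℓv ⊔ S.pc.lab ≤ ℓ := hflow.trans (sup_le hlab hl)
        exact rootSet_of_getElem? (le_sup_right.trans hflow') hr
          (blocksIn_singleton.2 ⟨le_sup_left.trans hflow', o, hv⟩)
      · exact Or.inr ⟨f, hcs ▸ List.mem_cons_self, hl, hb⟩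
    · exact Or.inr ⟨g, hcs ▸ List.mem_cons_of_mem _ hg, hl, hb⟩

end Reachability

theorem wellStamped_preservation_general
    {Lab : Type} [Lattice Lab] [OrderBot Lab] [DecidableEq Lab]
    [DecidableRel ((· ≤ ·) : Lab → Lab → Prop)]
    (S S' : RState Lab) (hws : WellStamped S) (hstep : RStep S S') :
    WellStamped S' := by
  cases hstep with
  | noop | jump | branchNZ => exact hws.setPc (by simp)
  | put | putLabel | add | mult | eq | labelOf | pcLabel | join | flowsTo | getOffset
    | getBlockSize | getBlockLabel => exact hws.setReg_of_not_ptr (by simp) (by simp)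
  | mov _ hrs =>
    exact hws.setReg le_rfl fun _ _ hpc hb => .of_rootSet (rootSet_of_getElem? hpc hrs hb)
  | load _ hrp hm hget => exact hws.load hrp hm hget
  | setOffset _ hrp _ => exact hws.setOffset hrp
  | store _ _ hrs hm hchk => exact hws.store hrs hm (le_sup_left.trans hchk)
  | write _ _ hrs hm _ hchk => exact hws.write hrs hm ((sup_le_sup_right le_sup_left _).trans hchk)
  | upgrade _ _ _ hm hget hup => exact hws.upgrade le_sup_left hm hget hup
  | alloc => exact hws.alloc le_rfl (sup_assoc _ _ _).le
  | call => exact hws.call le_sup_left le_sup_left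
  | ret _ hcs hr hflow => exact hws.ret hcs hr hflow

/-- The well-stamped invariant is preserved by execution of the register
machine (over any finite label lattice). -/
theorem wellStamped_preservation
    {Lab : Type} [Lattice Lab] [OrderBot Lab] [DecidableEq Lab]
    [DecidableRel ((· ≤ ·) : Lab → Lab → Prop)] [Fintype Lab]
    (S S' : RState Lab) (hws : WellStamped S) (hstep : RStep S S') :
    WellStamped S' :=
  wellStamped_preservation_general S S' hws hstep
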